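/- Suppose f₁ : ℕ → (ℝ → ℝ) is a family of functions such that for every τ ≥ 1, every index t', and every sequence (p_t) of reals, f₁_{t'}(∑_{t=0}^{τ-1} p_t) = ∑_{t=0}^{τ-1} f₁_t(p_t). If each f₁_t is monotonically increasing, then there exist a₁ ≥ 0 and constants c_t ∈ ℝ with f₁_t(x) = a₁·x + c_t for all t and x, where c_t = f₁_t(0), a₁ = f₁_0(1) - f₁_0(0), and moreover ∑ of constants is compatible: for all t', c_{t'} = ∑_{t=0}^{τ-1} c_t whenever the identity is applied with all p_t = 0. -/
import Mathlib

lemma additive_monotone_linear (g : ℝ → ℝ) (hm : Monotone g)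
    (hadd : ∀ x y, g (x + y) = g x + g y) : ∀ x, g x = g 1 * x := by
  have g0 : g 0 = 0 := by have := hadd 0 0; simp at this; linarith
  set G : ℝ →+ ℝ := AddMonoidHom.mk' g (fun x y => hadd x y) with hG
  have hq : ∀ q : ℚ, g (q : ℝ) = (q : ℝ) * g 1 := by
    intro q
    have := map_ratCast_smul G ℝ ℝ q (1 : ℝ)
    simpa [smul_eq_mul, hG] using this
  have hg1 : 0 ≤ g 1 := by
    have := hm (le_of_lt one_pos : (0:ℝ) ≤ 1)
    rw [g0] at this; exact this
  intro x
  apply le_antisymm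
  · apply le_of_forall_pos_le_add
    intro ε hε
    obtain ⟨r, hr1, hr2⟩ := exists_rat_btwn (lt_add_of_pos_right x
      (div_pos hε (by positivity : (0:ℝ) < g 1 + 1)))
    have h1 : g x ≤ g r := hm hr1.le
    rw [hq] at h1
    have h2 : (r : ℝ) * g 1 ≤ (x + ε / (g 1 + 1)) * g 1 :=
      mul_le_mul_of_nonneg_right hr2.le hg1
    have h3 : (x + ε / (g 1 + 1)) * g 1 ≤ x * g 1 + ε := by
      have : ε / (g 1 + 1) * g 1 ≤ ε := by
        rw [div_mul_eq_mul_div, div_le_iff₀ (by positivity)]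
        nlinarith
      nlinarith
    nlinarith
  · apply le_of_forall_pos_le_add
    intro ε hε
    obtain ⟨r, hr1, hr2⟩ := exists_rat_btwn (sub_lt_self x
      (div_pos hε (by positivity : (0:ℝ) < g 1 + 1)))
    have h1 : g r ≤ g x := hm hr2.le
    rw [hq] at h1
    have h2 : (x - ε / (g 1 + 1)) * g 1 ≤ (r : ℝ) * g 1 :=
      mul_le_mul_of_nonneg_right hr1.le hg1
    have h3 : x * g 1 - ε ≤ (x - ε / (g 1 + 1)) * g 1 := by
      have : ε / (g 1 + 1) * g 1 ≤ ε := by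
        rw [div_mul_eq_mul_div, div_le_iff₀ (by positivity)]
        nlinarith
      nlinarith
    nlinarith

theorem stmt5 (f₁ : ℕ → ℝ → ℝ) (hmono : ∀ t, Monotone (f₁ t))
    (h : ∀ (τ : ℕ), 1 ≤ τ → ∀ (t' : ℕ) (p : ℕ → ℝ),
      f₁ t' (∑ t ∈ Finset.range τ, p t) = ∑ t ∈ Finset.range τ, f₁ t (p t)) :
    ∃ a₁ : ℝ, 0 ≤ a₁ ∧ a₁ = f₁ 0 1 - f₁ 0 0 ∧
      (∀ (t : ℕ) (x : ℝ), f₁ t x = a₁ * x + f₁ t 0) ∧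
      (∀ τ : ℕ, 1 ≤ τ → ∀ t' : ℕ, f₁ t' 0 = ∑ t ∈ Finset.range τ, f₁ t 0) := by
  have heq : ∀ t x, f₁ t x = f₁ 0 x := by
    intro t x
    have := h 1 le_rfl t (fun _ => x)
    simpa using this
  have hadd : ∀ x y, f₁ 0 (x + y) = f₁ 0 x + f₁ 0 y := by
    intro x y
    have := h 2 (by norm_num) 0 (fun n => if n = 0 then x else y)
    simp [Finset.sum_range_succ, heq 1] at this
    exact this
  have g0 : f₁ 0 0 = 0 := by have := hadd 0 0; simp at this; linarith
  have hlin := additive_monotone_linear (f₁ 0) (hmono 0) hadd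
  refine ⟨f₁ 0 1, ?_, by rw [g0]; ring, ?_, ?_⟩
  · have := (hmono 0) (le_of_lt one_pos : (0:ℝ) ≤ 1)
    rw [g0] at this; exact this
  · intro t x
    rw [heq t x, heq t 0, hlin x, g0]; ring
  · intro τ hτ t'
    rw [heq t' 0, g0]
    rw [Finset.sum_congr rfl (fun t _ => by rw [heq t 0, g0])]
    simp
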